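/- Let ζ, ζ' be jointly standard normal with correlation ρ, |ρ| ≤ c < 1. Then there are constants C(c) and t₀(c) such that for all t ≥ t₀(c), P(ζ ≥ t, ζ' ≥ t) ≤ C(c) t^{-2} exp(−t²/(1+c)). -/

import Mathlib

open MeasureTheory ProbabilityTheory Real Set

/-!
Exponential tilting with the exact tilt: for `m > 0`, `-x²/2 ≤ m²/2 - m x`, so the standard
Gaussian weight of `[c, ∞)`, even against a factor `e^{b x}` with `b < m`, is at most
`e^{m²/2 + (b - m) c} / (√(2π) (m - b))`. Writing `ζ' = ρ ζ + s ζ₂` with `s = √(1 - ρ²)`, the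
section of the event at `ζ = x` is a half-line for `ζ₂`; tilting it at `m = t s / (1 + ρ)`, and
the remaining integral over `x ≥ t` at `m = t`, i.e. at the most likely point of the event,
gives `(1 + ρ)² / (2π s t²) · e^{-t²/(1+ρ)}` for every `t > 0`.
-/

theorem lintegral_ofReal_exp_mul_Ici {a : ℝ} (ha : a < 0) (c : ℝ) :
    ∫⁻ x in Ici c, ENNReal.ofReal (exp (a * x)) = ENNReal.ofReal (-exp (a * c) / a) := by
  rw [← setLIntegral_congr Ioi_ae_eq_Ici, ← integral_exp_mul_Ioi ha,
    ofReal_integral_eq_lintegral_ofReal (integrableOn_exp_mul_Ioi ha c)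
      (Filter.Eventually.of_forall fun x => (exp_pos _).le)]

theorem gaussianPDFReal_mul_exp_le (b m x : ℝ) :
    gaussianPDFReal 0 1 x * exp (b * x) ≤ (√(2 * π))⁻¹ * exp (m ^ 2 / 2) * exp ((b - m) * x) := by
  simp only [gaussianPDFReal, NNReal.coe_one, mul_one, sub_zero, mul_assoc, ← exp_add]
  gcongr _ * exp ?_
  nlinarith [sq_nonneg (x - m)]

theorem setLIntegral_gaussianReal_exp_mul_le {b m : ℝ} (hbm : b < m) (c : ℝ) :
    ∫⁻ x in Ici c, ENNReal.ofReal (exp (b * x)) ∂gaussianReal 0 1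
      ≤ ENNReal.ofReal (exp (m ^ 2 / 2 + (b - m) * c) / (√(2 * π) * (m - b))) := by
  rw [gaussianReal_of_var_ne_zero 0 one_ne_zero,
    setLIntegral_withDensity_eq_setLIntegral_mul _ (measurable_gaussianPDF 0 1) (by fun_prop)
      measurableSet_Ici]
  calc ∫⁻ x in Ici c, (gaussianPDF 0 1 * fun x => ENNReal.ofReal (exp (b * x))) x
      ≤ ∫⁻ x in Ici c, ENNReal.ofReal ((√(2 * π))⁻¹ * exp (m ^ 2 / 2))
          * ENNReal.ofReal (exp ((b - m) * x)) := by
        refine lintegral_mono fun x => ?_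
        simp only [Pi.mul_apply, gaussianPDF]
        rw [← ENNReal.ofReal_mul (gaussianPDFReal_nonneg 0 1 x),
          ← ENNReal.ofReal_mul (by positivity)]
        exact ENNReal.ofReal_le_ofReal (gaussianPDFReal_mul_exp_le b m x)
    _ = _ := by
        rw [lintegral_const_mul _ (by fun_prop), lintegral_ofReal_exp_mul_Ici (by linarith),
          ← ENNReal.ofReal_mul (by positivity), exp_add]
        congr 1
        rw [← neg_sub m b]
        field_simp

theorem gaussianReal_Ici_le {m : ℝ} (hm : 0 < m) (c : ℝ) :
    gaussianReal 0 1 (Ici c) ≤ ENNReal.ofReal (exp (m ^ 2 / 2 - m * c) / (√(2 * π) * m)) := by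
  simpa [← sub_eq_add_neg] using setLIntegral_gaussianReal_exp_mul_le hm c

theorem gaussianReal_prod_joint_tail_le {ρ : ℝ} (hρ : |ρ| < 1) {t : ℝ} (ht : 0 < t) :
    ((gaussianReal 0 1).prod (gaussianReal 0 1))
        {p | t ≤ p.1 ∧ t ≤ ρ * p.1 + √(1 - ρ ^ 2) * p.2}
      ≤ ENNReal.ofReal ((1 + ρ) ^ 2 / (2 * π * √(1 - ρ ^ 2) * t ^ 2) * exp (-t ^ 2 / (1 + ρ))) := by
  set γ := gaussianReal 0 1
  set s := √(1 - ρ ^ 2)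
  obtain ⟨hρ₁, hρ₂⟩ := abs_lt.mp hρ
  have hs : 0 < s := sqrt_pos.mpr (by nlinarith)
  have hs_sq : s ^ 2 = 1 - ρ ^ 2 := sq_sqrt (by nlinarith)
  set a := t / (1 + ρ)
  have ha : 0 < a := div_pos ht (by linarith)
  have hat : a * (1 + ρ) = t := div_mul_cancel₀ t (by linarith)
  have hS : MeasurableSet {p : ℝ × ℝ | t ≤ p.1 ∧ t ≤ ρ * p.1 + s * p.2} :=
    (measurableSet_le measurable_const measurable_fst).inter
      (measurableSet_le measurable_const
        ((measurable_fst.const_mul ρ).add (measurable_snd.const_mul s)))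
  have hsection (x : ℝ) : γ (Prod.mk x ⁻¹' {p | t ≤ p.1 ∧ t ≤ ρ * p.1 + s * p.2})
      = (Ici t).indicator (fun x => γ (Ici ((t - ρ * x) / s))) x := by
    by_cases hx : t ≤ x
    · rw [indicator_of_mem (show x ∈ Ici t from hx)]
      congr 1
      ext y
      simp only [mem_preimage, mem_ofPred_eq, mem_Ici, div_le_iff₀ hs, hx, true_and]
      constructor <;> intro h <;> linarith
    · simp [hx]
  have hinner (x : ℝ) : γ (Ici ((t - ρ * x) / s))
      ≤ ENNReal.ofReal (exp ((a * s) ^ 2 / 2 - a * t) / (√(2 * π) * (a * s)))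
        * ENNReal.ofReal (exp (a * ρ * x)) := by
    refine (gaussianReal_Ici_le (mul_pos ha hs) _).trans_eq ?_
    rw [← ENNReal.ofReal_mul (by positivity), div_mul_eq_mul_div (exp _) _ (exp _), ← exp_add]
    congr 3
    field_simp
    ring
  have hρa : a * ρ < t := by nlinarith
  calc (γ.prod γ) {p | t ≤ p.1 ∧ t ≤ ρ * p.1 + s * p.2}
      = ∫⁻ x in Ici t, γ (Ici ((t - ρ * x) / s)) ∂γ := by
        simp_rw [Measure.prod_apply hS, hsection, lintegral_indicator measurableSet_Ici]
    _ ≤ ∫⁻ x in Ici t, ENNReal.ofReal (exp ((a * s) ^ 2 / 2 - a * t) / (√(2 * π) * (a * s)))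
          * ENNReal.ofReal (exp (a * ρ * x)) ∂γ := lintegral_mono fun x => hinner x
    _ ≤ ENNReal.ofReal (exp ((a * s) ^ 2 / 2 - a * t) / (√(2 * π) * (a * s)))
          * ENNReal.ofReal (exp (t ^ 2 / 2 + (a * ρ - t) * t) / (√(2 * π) * (t - a * ρ))) := by
        rw [lintegral_const_mul _ (by fun_prop)]
        gcongr
        exact setLIntegral_gaussianReal_exp_mul_le hρa t
    _ = _ := by
        rw [← ENNReal.ofReal_mul (by positivity)]
        have hta : t - a * ρ = a := by linarith
        have hexponent : (a * s) ^ 2 / 2 - a * t + (t ^ 2 / 2 + (a * ρ - t) * t)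
            = -t ^ 2 / (1 + ρ) := by
          rw [mul_pow, hs_sq, ← hat]
          field_simp
          ring
        have hsqrt : √(2 * π) ^ 2 = 2 * π := sq_sqrt (by positivity)
        have h1ρ : 1 + ρ ≠ 0 := by linarith
        rw [hta, div_mul_div_comm, ← exp_add, hexponent, ← hat]
        congr 1
        field_simp
        rw [hsqrt]

theorem joint_tail_bound_le {ρ c : ℝ} (hρc : |ρ| ≤ c) (hc1 : c < 1) (t : ℝ) :
    (1 + ρ) ^ 2 / (2 * π * √(1 - ρ ^ 2) * t ^ 2) * exp (-t ^ 2 / (1 + ρ))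
      ≤ 1 / (1 - c) * t ^ (-2 : ℤ) * exp (-t ^ 2 / (1 + c)) := by
  obtain ⟨hρ₁, hρ₂⟩ := abs_le.mp hρc
  have hc_le_sqrt : 1 - c ≤ √(1 - ρ ^ 2) := le_sqrt_of_sq_le (by nlinarith)
  have hs : 0 < √(1 - ρ ^ 2) := by linarith
  have hconst : (1 + ρ) ^ 2 / (2 * π * √(1 - ρ ^ 2)) ≤ 1 / (1 - c) := by
    rw [div_le_div_iff₀ (by positivity) (by linarith)]
    nlinarith [pi_gt_three, mul_le_mul hc_le_sqrt (show (1 + ρ) ^ 2 ≤ 4 by nlinarith)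
      (sq_nonneg _) hs.le]
  have hexp : exp (-t ^ 2 / (1 + ρ)) ≤ exp (-t ^ 2 / (1 + c)) := by
    rw [neg_div, neg_div, exp_le_exp, neg_le_neg_iff]
    gcongr
    linarith
  calc (1 + ρ) ^ 2 / (2 * π * √(1 - ρ ^ 2) * t ^ 2) * exp (-t ^ 2 / (1 + ρ))
      = (1 + ρ) ^ 2 / (2 * π * √(1 - ρ ^ 2)) * (t ^ 2)⁻¹ * exp (-t ^ 2 / (1 + ρ)) := by ring
    _ ≤ 1 / (1 - c) * t ^ (-2 : ℤ) * exp (-t ^ 2 / (1 + c)) := by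
      rw [zpow_neg, zpow_two, ← sq]
      gcongr

theorem stmt16_general {Ω : Type*} [MeasurableSpace Ω] (μ : Measure Ω)
    (c : ℝ) (hc1 : c < 1) :
    ∃ C : ℝ, 0 < C ∧ ∃ t₀ : ℝ, 0 < t₀ ∧
      ∀ (ρ : ℝ), |ρ| ≤ c →
      ∀ (ζ ζ₂ : Ω → ℝ), Measurable ζ → Measurable ζ₂ →
        IndepFun ζ ζ₂ μ →
        Measure.map ζ μ = gaussianReal 0 1 →
        Measure.map ζ₂ μ = gaussianReal 0 1 →
        ∀ (ζ' : Ω → ℝ), (∀ ω, ζ' ω = ρ * ζ ω + Real.sqrt (1 - ρ ^ 2) * ζ₂ ω) →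
        ∀ t : ℝ, t₀ ≤ t →
          μ {ω | t ≤ ζ ω ∧ t ≤ ζ' ω}
            ≤ ENNReal.ofReal (C * t ^ (-2 : ℤ) * Real.exp (-t ^ 2 / (1 + c))) := by
  refine ⟨1 / (1 - c), by simpa, 1, one_pos, ?_⟩
  intro ρ hρc ζ ζ₂ hζ hζ₂ hindep hlawζ hlawζ₂ ζ' hζ' t ht
  have hρ : |ρ| < 1 := hρc.trans_lt hc1
  have hlaw : μ.map (fun ω => (ζ ω, ζ₂ ω)) = (gaussianReal 0 1).prod (gaussianReal 0 1) := by
    rw [(indepFun_iff_map_prod_eq_prod_map_map' hζ.aemeasurable hζ₂.aemeasurable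
      (by rw [hlawζ]; infer_instance) (by rw [hlawζ₂]; infer_instance)).mp hindep, hlawζ, hlawζ₂]
  have hevent : {ω | t ≤ ζ ω ∧ t ≤ ζ' ω} = (fun ω => (ζ ω, ζ₂ ω)) ⁻¹'
      {p | t ≤ p.1 ∧ t ≤ ρ * p.1 + √(1 - ρ ^ 2) * p.2} := by
    ext ω
    simp [hζ' ω]
  calc μ {ω | t ≤ ζ ω ∧ t ≤ ζ' ω}
      ≤ ((gaussianReal 0 1).prod (gaussianReal 0 1))
          {p | t ≤ p.1 ∧ t ≤ ρ * p.1 + √(1 - ρ ^ 2) * p.2} :=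
        hevent ▸ hlaw ▸ Measure.le_map_apply (hζ.prodMk hζ₂).aemeasurable _
    _ ≤ _ := gaussianReal_prod_joint_tail_le hρ (by linarith)
    _ ≤ _ := ENNReal.ofReal_le_ofReal (joint_tail_bound_le hρc hc1 t)

/-- (Berman's joint tail bound.) For `0 ≤ c < 1` there exist constants
`C(c) > 0` and `t₀(c) > 0` such that for every pair `(ζ, ζ')` of jointly standard normal
random variables with correlation `ρ`, `|ρ| ≤ c` (realized as `ζ' = ρ ζ + √(1−ρ²) ζ₂`
with `ζ, ζ₂` independent standard normals), and every `t ≥ t₀`,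
`P(ζ ≥ t, ζ' ≥ t) ≤ C t^{-2} exp(−t²/(1+c))`. -/
theorem stmt16 {Ω : Type*} [MeasurableSpace Ω] (μ : Measure Ω) [IsProbabilityMeasure μ]
    (c : ℝ) (hc0 : 0 ≤ c) (hc1 : c < 1) :
    ∃ C : ℝ, 0 < C ∧ ∃ t₀ : ℝ, 0 < t₀ ∧
      ∀ (ρ : ℝ), |ρ| ≤ c →
      ∀ (ζ ζ₂ : Ω → ℝ), Measurable ζ → Measurable ζ₂ →
        IndepFun ζ ζ₂ μ →
        Measure.map ζ μ = gaussianReal 0 1 →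
        Measure.map ζ₂ μ = gaussianReal 0 1 →
        ∀ (ζ' : Ω → ℝ), (∀ ω, ζ' ω = ρ * ζ ω + Real.sqrt (1 - ρ ^ 2) * ζ₂ ω) →
        ∀ t : ℝ, t₀ ≤ t →
          μ {ω | t ≤ ζ ω ∧ t ≤ ζ' ω}
            ≤ ENNReal.ofReal (C * t ^ (-2 : ℤ) * Real.exp (-t ^ 2 / (1 + c))) :=
  stmt16_general μ c hc1
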